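/- Let K be a field of characteristic zero and G a free group. The short exact sequence 0 → IG/(IG)² ⊗ IG/(IG)² → IG/(IG)³ → IG/(IG)² → 0 is exact, where the first map is induced by multiplication ([x]-[1], [y]-[1]) ↦ ([x]-[1])·([y]-[1]) and the second is the natural projection. -/

import Mathlib

/-!
`π` is onto with kernel `IG²/IG³ = range μ`, so the content is the injectivity of `μ`.
The map `D : g ↦ [g - 1]` is a homomorphism `G → IG/IG²`, and `(g, h) ↦ D g ⊗ D h` is a
2-cocycle defining a central extension of `G` by `IG/IG² ⊗ IG/IG²`. When `G` is free this
extension splits, which yields `t : G → IG/IG² ⊗ IG/IG²` with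
`t (g h) = t g + t h + D g ⊗ D h`. Its linear extension `L` to `K[G]` satisfies
`L (a b) = ε b • L a + ε a • L b + [a] ⊗ [b]`, so `L` kills `IG³` and maps `a b` to
`[a] ⊗ [b]` for `a, b ∈ IG`: it induces a left inverse of `μ`.
-/

open scoped TensorProduct

/-- The augmentation map `K[G] → K`. -/
noncomputable def aug (K G : Type) [Field K] [Group G] : MonoidAlgebra K G →ₐ[K] K :=
  MonoidAlgebra.lift K K G 1

/-- The augmentation ideal `IG ⊆ K[G]`, as a `K`-submodule. -/
noncomputable def Iaug (K G : Type) [Field K] [Group G] : Submodule K (MonoidAlgebra K G) :=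
  LinearMap.ker (aug K G).toLinearMap

/-- The square `(IG)²` of the augmentation ideal. -/
noncomputable def Iaug2 (K G : Type) [Field K] [Group G] : Submodule K (MonoidAlgebra K G) :=
  Iaug K G * Iaug K G

/-- The cube `(IG)³` of the augmentation ideal. -/
noncomputable def Iaug3 (K G : Type) [Field K] [Group G] : Submodule K (MonoidAlgebra K G) :=
  Iaug K G * Iaug K G * Iaug K G

lemma mul_mem_Iaug {K G : Type} [Field K] [Group G] (a b : MonoidAlgebra K G)
    (ha : a ∈ Iaug K G) (hb : b ∈ Iaug K G) : a * b ∈ Iaug K G := by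
  simp only [Iaug, LinearMap.mem_ker, AlgHom.toLinearMap_apply, map_mul] at *
  rw [ha, zero_mul]

/-- `IG/(IG)²`, as a quotient of the module `IG`. -/
noncomputable abbrev IaugMod2 (K G : Type) [Field K] [Group G] :=
  Iaug K G ⧸ (Submodule.comap (Iaug K G).subtype (Iaug2 K G))

/-- `IG/(IG)³` (the second Passi quotient `P₂(G)`), as a quotient of the module `IG`. -/
noncomputable abbrev IaugMod3 (K G : Type) [Field K] [Group G] :=
  Iaug K G ⧸ (Submodule.comap (Iaug K G).subtype (Iaug3 K G))

section Augmentation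
variable {K G : Type} [Field K] [Group G]

lemma Iaug2_le_Iaug : Iaug2 K G ≤ Iaug K G :=
  Submodule.mul_le.2 fun a ha b hb => mul_mem_Iaug a b ha hb

variable (K G) in
noncomputable def augProj : MonoidAlgebra K G →ₗ[K] Iaug K G :=
  LinearMap.codRestrict (Iaug K G)
    (LinearMap.id - Algebra.linearMap K (MonoidAlgebra K G) ∘ₗ (aug K G).toLinearMap)
    fun a => by
      simp only [Iaug, LinearMap.mem_ker, LinearMap.sub_apply, LinearMap.id_apply,
        LinearMap.comp_apply, Algebra.linearMap_apply, AlgHom.toLinearMap_apply, map_sub,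
        AlgHom.commutes, Algebra.algebraMap_self, RingHom.id_apply, sub_self]

lemma augProj_coe (a : MonoidAlgebra K G) :
    (augProj K G a : MonoidAlgebra K G) = a - algebraMap K _ (aug K G a) := rfl

lemma mem_Iaug_iff {a : MonoidAlgebra K G} : a ∈ Iaug K G ↔ aug K G a = 0 := Iff.rfl

lemma augProj_of_mem {a : MonoidAlgebra K G} (ha : a ∈ Iaug K G) :
    augProj K G a = ⟨a, ha⟩ := by
  apply Subtype.ext
  rw [augProj_coe, mem_Iaug_iff.1 ha, map_zero, sub_zero]

variable (K G) in
noncomputable def augQuot : MonoidAlgebra K G →ₗ[K] IaugMod2 K G :=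
  Submodule.mkQ _ ∘ₗ augProj K G

lemma augQuot_of_mem {a : MonoidAlgebra K G} (ha : a ∈ Iaug K G) :
    augQuot K G a = Submodule.Quotient.mk ⟨a, ha⟩ := by
  simp [augQuot, augProj_of_mem ha]

lemma augQuot_eq_zero_of_mem_Iaug2 {a : MonoidAlgebra K G} (ha : a ∈ Iaug2 K G) :
    augQuot K G a = 0 := by
  rw [augQuot_of_mem (Iaug2_le_Iaug ha), Submodule.Quotient.mk_eq_zero]
  exact ha

lemma augQuot_mul (a b : MonoidAlgebra K G) :
    augQuot K G (a * b) = aug K G b • augQuot K G a + aug K G a • augQuot K G b := by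
  have key : (augProj K G (a * b) : MonoidAlgebra K G) - aug K G b • augProj K G a
      - aug K G a • augProj K G b = augProj K G a * augProj K G b := by
    simp only [augProj_coe, map_mul, Algebra.algebraMap_eq_smul_one, sub_mul, mul_sub,
      smul_mul_assoc, mul_smul_comm, one_mul, mul_one, smul_sub]
    module
  have hmk : augQuot K G (a * b) - aug K G b • augQuot K G a - aug K G a • augQuot K G b
      = Submodule.Quotient.mk (augProj K G (a * b) - aug K G b • augProj K G a
          - aug K G a • augProj K G b) := by
    simp only [augQuot, LinearMap.comp_apply, Submodule.mkQ_apply, Submodule.Quotient.mk_sub,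
      Submodule.Quotient.mk_smul]
  rw [← sub_eq_zero, ← sub_sub, hmk, Submodule.Quotient.mk_eq_zero, Submodule.mem_comap,
    Submodule.subtype_apply, Submodule.coe_sub, Submodule.coe_sub, Submodule.coe_smul,
    Submodule.coe_smul, key]
  exact Submodule.mul_mem_mul (augProj K G a).2 (augProj K G b).2

lemma aug_single (g : G) (c : K) : aug K G (MonoidAlgebra.single g c) = c := by
  simp [aug, MonoidAlgebra.lift_single]

lemma augQuot_one : augQuot K G 1 = 0 := by
  have : augProj K G 1 = 0 := Subtype.ext <| by rw [augProj_coe, map_one, map_one, sub_self]; rfl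
  simp [augQuot, this]

variable (K G) in
noncomputable def augDeriv : G →* Multiplicative (IaugMod2 K G) where
  toFun g := .ofAdd (augQuot K G (MonoidAlgebra.single g 1))
  map_one' := by rw [← MonoidAlgebra.one_def, augQuot_one, ofAdd_zero]
  map_mul' g h := by
    have : MonoidAlgebra.single (g * h) (1 : K) = .single g 1 * .single h 1 := by
      rw [MonoidAlgebra.single_mul_single, one_mul]
    rw [← ofAdd_add, this, augQuot_mul, aug_single, aug_single, one_smul, one_smul, add_comm]

lemma augQuot_single (g : G) (c : K) :
    augQuot K G (MonoidAlgebra.single g c) = c • (augDeriv K G g).toAdd := by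
  show _ = c • augQuot K G (MonoidAlgebra.single g 1)
  rw [← map_smul, MonoidAlgebra.smul_single, smul_eq_mul, mul_one]

end Augmentation

section TensorSquareExtension
variable (K : Type) {V G : Type} [CommRing K] [AddCommGroup V] [Module K V] [Group G]

def TensorSquareExt (_D : G →* Multiplicative V) : Type := (V ⊗[K] V) × G

variable {K} (D : G →* Multiplicative V)

noncomputable instance : Group (TensorSquareExt K D) where
  mul a b := (a.1 + b.1 + (D a.2).toAdd ⊗ₜ[K] (D b.2).toAdd, a.2 * b.2)
  one := (0, 1)
  inv a := ((D a.2).toAdd ⊗ₜ[K] (D a.2).toAdd - a.1, a.2⁻¹)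
  mul_assoc a b c := Prod.ext (by
      show a.1 + b.1 + (D a.2).toAdd ⊗ₜ[K] (D b.2).toAdd + c.1
          + (D (a.2 * b.2)).toAdd ⊗ₜ[K] (D c.2).toAdd
        = a.1 + (b.1 + c.1 + (D b.2).toAdd ⊗ₜ[K] (D c.2).toAdd)
          + (D a.2).toAdd ⊗ₜ[K] (D (b.2 * c.2)).toAdd
      simp only [map_mul, toAdd_mul, TensorProduct.add_tmul, TensorProduct.tmul_add]
      abel) (mul_assoc _ _ _)
  one_mul a := Prod.ext (by
      show 0 + a.1 + (D 1).toAdd ⊗ₜ[K] _ = a.1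
      simp) (one_mul _)
  mul_one a := Prod.ext (by
      show a.1 + 0 + _ ⊗ₜ[K] (D 1).toAdd = a.1
      simp) (mul_one _)
  inv_mul_cancel a := Prod.ext (by
      show _ - a.1 + a.1 + (D a.2⁻¹).toAdd ⊗ₜ[K] _ = 0
      simp [TensorProduct.neg_tmul]) (inv_mul_cancel _)

def IsTensorCocycle (t : G → V ⊗[K] V) : Prop :=
  ∀ g h, t (g * h) = t g + t h + (D g).toAdd ⊗ₜ[K] (D h).toAdd

variable (K) in
lemma exists_isTensorCocycle_of_free {X : Type} (D : FreeGroup X →* Multiplicative V) :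
    ∃ t : FreeGroup X → V ⊗[K] V, IsTensorCocycle D t := by
  let s : FreeGroup X →* TensorSquareExt K D := FreeGroup.lift fun x => (0, .of x)
  let p : TensorSquareExt K D →* FreeGroup X := ⟨⟨Prod.snd, rfl⟩, fun _ _ => rfl⟩
  have hsnd : ∀ g, (s g).2 = g :=
    DFunLike.congr_fun (FreeGroup.ext_hom (p.comp s) (.id _) fun _ => rfl)
  refine ⟨fun g => (s g).1, fun g h => ?_⟩
  show (s (g * h)).1 = _
  rw [map_mul]
  show _ + _ + (D (s g).2).toAdd ⊗ₜ[K] (D (s h).2).toAdd = _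
  rw [hsnd, hsnd]

end TensorSquareExtension

noncomputable def linearExtend {K G W : Type} [Semiring K] [AddCommMonoid W] [Module K W]
    (t : G → W) : MonoidAlgebra K G →ₗ[K] W :=
  Finsupp.linearCombination K t ∘ₗ (MonoidAlgebra.coeffLinearEquiv K).toLinearMap

lemma linearExtend_single {K G W : Type} [Semiring K] [AddCommMonoid W] [Module K W]
    (t : G → W) (g : G) (c : K) : linearExtend t (MonoidAlgebra.single g c) = c • t g := by
  simp [linearExtend]

section Retraction
variable {K G : Type} [Field K] [Group G] {t : G → IaugMod2 K G ⊗[K] IaugMod2 K G}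

lemma linearExtend_mul (ht : IsTensorCocycle (augDeriv K G) t) (a b : MonoidAlgebra K G) :
    linearExtend t (a * b) = aug K G b • linearExtend t a + aug K G a • linearExtend t b
      + augQuot K G a ⊗ₜ[K] augQuot K G b := by
  induction a using MonoidAlgebra.induction_linear with
  | zero => simp
  | add a a' iha iha' =>
    simp only [add_mul, map_add, iha, iha', add_smul, smul_add, TensorProduct.add_tmul]
    abel
  | single g c =>
    induction b using MonoidAlgebra.induction_linear with
    | zero => simp
    | add b b' ihb ihb' =>
      simp only [mul_add, map_add, ihb, ihb', add_smul, smul_add, TensorProduct.tmul_add]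
      abel
    | single h d =>
      rw [MonoidAlgebra.single_mul_single, linearExtend_single, linearExtend_single,
        linearExtend_single, augQuot_single, augQuot_single, aug_single, aug_single, ht,
        TensorProduct.smul_tmul_smul]
      module

lemma linearExtend_eq_zero_of_mem_Iaug3 (ht : IsTensorCocycle (augDeriv K G) t)
    {a : MonoidAlgebra K G} (ha : a ∈ Iaug3 K G) : linearExtend t a = 0 := by
  rw [Iaug3, mul_assoc] at ha
  refine Submodule.mul_induction_on ha (fun x hx y hy => ?_) fun x y hx hy => ?_
  · rw [linearExtend_mul ht, mem_Iaug_iff.1 hx, mem_Iaug_iff.1 (Iaug2_le_Iaug hy),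
      augQuot_eq_zero_of_mem_Iaug2 hy, zero_smul, zero_smul, TensorProduct.tmul_zero, add_zero,
      add_zero]
  · rw [map_add, hx, hy, add_zero]

noncomputable def cocycleRetraction (ht : IsTensorCocycle (augDeriv K G) t) :
    IaugMod3 K G →ₗ[K] IaugMod2 K G ⊗[K] IaugMod2 K G :=
  Submodule.liftQ _ (linearExtend t ∘ₗ (Iaug K G).subtype)
    fun _ ha => LinearMap.mem_ker.2 (linearExtend_eq_zero_of_mem_Iaug3 ht ha)

end Retraction

section Exactness
variable {K G : Type} [Field K] [Group G]

def IsAugMul (μ : IaugMod2 K G ⊗[K] IaugMod2 K G →ₗ[K] IaugMod3 K G) : Prop :=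
  ∀ a b : Iaug K G, μ (Submodule.Quotient.mk a ⊗ₜ[K] Submodule.Quotient.mk b)
    = Submodule.Quotient.mk ⟨a * b, mul_mem_Iaug _ _ a.2 b.2⟩

def IsAugProj (π : IaugMod3 K G →ₗ[K] IaugMod2 K G) : Prop :=
  ∀ a : Iaug K G, π (Submodule.Quotient.mk a) = Submodule.Quotient.mk a

variable {μ : IaugMod2 K G ⊗[K] IaugMod2 K G →ₗ[K] IaugMod3 K G}
  {π : IaugMod3 K G →ₗ[K] IaugMod2 K G}

lemma IsAugMul.leftInverse_cocycleRetraction (hμ : IsAugMul μ)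
    {t : G → IaugMod2 K G ⊗[K] IaugMod2 K G} (ht : IsTensorCocycle (augDeriv K G) t) :
    Function.LeftInverse (cocycleRetraction ht) μ := by
  suffices cocycleRetraction ht ∘ₗ μ = LinearMap.id from LinearMap.congr_fun this
  refine TensorProduct.ext' fun x y => ?_
  obtain ⟨a, rfl⟩ := Submodule.Quotient.mk_surjective _ x
  obtain ⟨b, rfl⟩ := Submodule.Quotient.mk_surjective _ y
  rw [LinearMap.comp_apply, hμ, cocycleRetraction, Submodule.liftQ_apply, LinearMap.comp_apply,
    Submodule.subtype_apply, linearExtend_mul ht, mem_Iaug_iff.1 a.2, mem_Iaug_iff.1 b.2,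
    zero_smul, zero_smul, zero_add, zero_add, augQuot_of_mem a.2, augQuot_of_mem b.2]
  rfl

lemma range_le_ker_of_isAugMul (hμ : IsAugMul μ) (hπ : IsAugProj π) :
    LinearMap.range μ ≤ LinearMap.ker π := by
  rw [LinearMap.range_le_ker_iff]
  refine TensorProduct.ext' fun x y => ?_
  obtain ⟨a, rfl⟩ := Submodule.Quotient.mk_surjective _ x
  obtain ⟨b, rfl⟩ := Submodule.Quotient.mk_surjective _ y
  rw [LinearMap.comp_apply, hμ, hπ, LinearMap.zero_apply, Submodule.Quotient.mk_eq_zero]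
  exact Submodule.mul_mem_mul a.2 b.2

lemma ker_le_range_of_isAugMul (hμ : IsAugMul μ) (hπ : IsAugProj π) :
    LinearMap.ker π ≤ LinearMap.range μ := by
  intro z hz
  obtain ⟨a, rfl⟩ := Submodule.Quotient.mk_surjective _ z
  rw [LinearMap.mem_ker, hπ, Submodule.Quotient.mk_eq_zero] at hz
  exact Submodule.mul_induction_on' (C := fun x hx =>
      Submodule.Quotient.mk (p := Submodule.comap (Iaug K G).subtype (Iaug3 K G))
        ⟨x, Iaug2_le_Iaug hx⟩ ∈ LinearMap.range μ)
    (fun x hx y hy =>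
      ⟨Submodule.Quotient.mk ⟨x, hx⟩ ⊗ₜ[K] Submodule.Quotient.mk ⟨y, hy⟩, hμ _ _⟩)
    (fun _ _ _ _ => add_mem) hz

lemma IsAugProj.surjective (hπ : IsAugProj π) : Function.Surjective π := fun y => by
  obtain ⟨a, rfl⟩ := Submodule.Quotient.mk_surjective _ y
  exact ⟨Submodule.Quotient.mk a, hπ a⟩

end Exactness

theorem stmt_15_general (K : Type) [Field K] (X : Type)
    (μ : (IaugMod2 K (FreeGroup X)) ⊗[K] (IaugMod2 K (FreeGroup X)) →ₗ[K]
      IaugMod3 K (FreeGroup X))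
    (hμ : ∀ a b : Iaug K (FreeGroup X),
      μ (Submodule.Quotient.mk a ⊗ₜ[K] Submodule.Quotient.mk b)
        = Submodule.Quotient.mk
            ⟨(a : MonoidAlgebra K (FreeGroup X)) * (b : MonoidAlgebra K (FreeGroup X)),
              mul_mem_Iaug _ _ a.2 b.2⟩)
    (π : IaugMod3 K (FreeGroup X) →ₗ[K] IaugMod2 K (FreeGroup X))
    (hπ : ∀ a : Iaug K (FreeGroup X),
      π (Submodule.Quotient.mk a) = Submodule.Quotient.mk a) :
    Function.Injective μ ∧ LinearMap.range μ = LinearMap.ker π ∧ Function.Surjective π := by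
  obtain ⟨t, ht⟩ := exists_isTensorCocycle_of_free K (augDeriv K (FreeGroup X))
  exact ⟨(IsAugMul.leftInverse_cocycleRetraction hμ ht).injective,
    le_antisymm (range_le_ker_of_isAugMul hμ hπ) (ker_le_range_of_isAugMul hμ hπ),
    IsAugProj.surjective hπ⟩

/-- for a free group `G`, the sequence
`0 → IG/(IG)² ⊗ IG/(IG)² → IG/(IG)³ → IG/(IG)² → 0` is exact, where the first map `μ` is
induced by multiplication and the second map `π` is the natural projection. -/
theorem stmt_15 (K : Type) [Field K] [CharZero K] (X : Type)
    (μ : (IaugMod2 K (FreeGroup X)) ⊗[K] (IaugMod2 K (FreeGroup X)) →ₗ[K]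
      IaugMod3 K (FreeGroup X))
    (hμ : ∀ a b : Iaug K (FreeGroup X),
      μ (Submodule.Quotient.mk a ⊗ₜ[K] Submodule.Quotient.mk b)
        = Submodule.Quotient.mk
            ⟨(a : MonoidAlgebra K (FreeGroup X)) * (b : MonoidAlgebra K (FreeGroup X)),
              mul_mem_Iaug _ _ a.2 b.2⟩)
    (π : IaugMod3 K (FreeGroup X) →ₗ[K] IaugMod2 K (FreeGroup X))
    (hπ : ∀ a : Iaug K (FreeGroup X),
      π (Submodule.Quotient.mk a) = Submodule.Quotient.mk a) :
    Function.Injective μ ∧ LinearMap.range μ = LinearMap.ker π ∧ Function.Surjective π :=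
  stmt_15_general K X μ hμ π hπ
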